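/- If U and V are finite-dimensional vector subspaces of ℝ^d with dim(U) = dim(V), then the largest principal angle between U and V equals the largest principal angle between V and U, i.e. ∠(U,V) = ∠(V,U), where ∠(U,V) = max over unit u ∈ U of min over unit v ∈ V of the angle between u and v. -/

import Mathlib

open RealInnerProductSpace

/-- The largest principal angle between two subspaces `U` and `V` of `ℝ^d`:
`arccos` of the infimum over unit `u ∈ U` of the supremum over unit `v ∈ V`
of `⟪u, v⟫`. -/
noncomputable def subspaceAngle {d : ℕ} (U V : Submodule ℝ (EuclideanSpace ℝ (Fin d))) : ℝ :=
  Real.arccos (sInf {c : ℝ | ∃ u ∈ U, ‖u‖ = 1 ∧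
    c = sSup {s : ℝ | ∃ v ∈ V, ‖v‖ = 1 ∧ s = ⟪u, v⟫}})

/-!
Let `P : U → V` be the orthogonal projection onto `V` restricted to `U`; its adjoint is the
projection onto `U` restricted to `V`. For `u ∈ U` the supremum of `⟪u, v⟫` over unit `v ∈ V`
is `‖P u‖`, so `cos ∠(U, V)` is the minimum modulus `inf_{‖u‖ = 1} ‖P u‖` of `P`, and
`cos ∠(V, U)` is that of `P*`. For any linear map `T` of finite-dimensional spaces, the square
of its minimum modulus is the least eigenvalue of `T* T`. Now `T* T` and `T T*` share their
nonzero eigenvalues, and when source and target have equal dimension also the eigenvalue `0`,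
because `ker T` and `ker T*` then have the same dimension.
-/

open LinearMap (adjoint)
open Module.End Metric

section Adjoint

variable {𝕜 E F : Type*} [RCLike 𝕜] [NormedAddCommGroup E] [InnerProductSpace 𝕜 E]
  [NormedAddCommGroup F] [InnerProductSpace 𝕜 F] [FiniteDimensional 𝕜 E] [FiniteDimensional 𝕜 F]

lemma finrank_ker_adjoint (T : E →ₗ[𝕜] F) (h : Module.finrank 𝕜 E = Module.finrank 𝕜 F) :
    Module.finrank 𝕜 (adjoint T).ker = Module.finrank 𝕜 T.ker := by
  have := T.finrank_range_add_finrank_ker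
  have := (adjoint T).finrank_range_add_finrank_ker
  have := T.finrank_range_adjoint
  omega

lemma hasEigenvalue_self_comp_adjoint {T : E →ₗ[𝕜] F} {μ : 𝕜}
    (h : Module.finrank 𝕜 E = Module.finrank 𝕜 F) (hμ : HasEigenvalue (adjoint T ∘ₗ T) μ) :
    HasEigenvalue (T ∘ₗ adjoint T) μ := by
  rcases eq_or_ne μ 0 with rfl | hμ0
  · rw [hasEigenvalue_iff, eigenspace_zero, T.ker_adjoint_comp_self] at hμ
    rw [hasEigenvalue_iff, eigenspace_zero, T.ker_self_comp_adjoint, ne_eq,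
      ← Submodule.finrank_eq_zero, finrank_ker_adjoint T h, Submodule.finrank_eq_zero]
    exact hμ
  · obtain ⟨x, hx⟩ := hμ.exists_hasEigenvector
    have hTx : adjoint T (T x) = μ • x := hx.apply_eq_smul
    refine hasEigenvalue_of_hasEigenvector (x := T x) ⟨?_, fun hx0 ↦ ?_⟩
    · rw [mem_eigenspace_iff, LinearMap.comp_apply, hTx, map_smul]
    · rw [hx0, map_zero, eq_comm, smul_eq_zero] at hTx
      exact hTx.elim hμ0 hx.2

lemma adjoint_orthogonalProjectionOnto_comp_subtype (U V : Submodule 𝕜 E) :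
    adjoint (V.orthogonalProjectionOnto.toLinearMap ∘ₗ U.subtype) =
      U.orthogonalProjectionOnto.toLinearMap ∘ₗ V.subtype := by
  symm
  rw [LinearMap.eq_adjoint_iff]
  intro x y
  simp

end Adjoint

section MinModulus

variable {𝕜 E F : Type*} [NormedField 𝕜] [SeminormedAddCommGroup E] [NormedSpace 𝕜 E]
  [SeminormedAddCommGroup F] [NormedSpace 𝕜 F]

noncomputable def minModulus (T : E →ₗ[𝕜] F) : ℝ :=
  ⨅ x : sphere (0 : E) 1, ‖T x‖

lemma minModulus_nonneg (T : E →ₗ[𝕜] F) : 0 ≤ minModulus T :=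
  Real.iInf_nonneg fun _ ↦ norm_nonneg _

lemma minModulus_le (T : E →ₗ[𝕜] F) (x : sphere (0 : E) 1) : minModulus T ≤ ‖T x‖ :=
  ciInf_le ⟨0, by rintro _ ⟨y, rfl⟩; exact norm_nonneg _⟩ x

lemma minModulus_of_subsingleton [Subsingleton E] (T : E →ₗ[𝕜] F) : minModulus T = 0 := by
  have : IsEmpty (sphere (0 : E) 1) :=
    ⟨fun x ↦ ne_zero_of_mem_unit_sphere x (Subsingleton.elim _ _)⟩
  exact Real.iInf_of_isEmpty _

end MinModulus

section RealInnerProduct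

variable {E F : Type*} [NormedAddCommGroup E] [InnerProductSpace ℝ E]
  [NormedAddCommGroup F] [InnerProductSpace ℝ F] [FiniteDimensional ℝ E] [FiniteDimensional ℝ F]

lemma inner_adjoint_comp_self_apply_self (T : E →ₗ[ℝ] F) (x : E) :
    ⟪(adjoint T ∘ₗ T) x, x⟫ = ‖T x‖ ^ 2 := by
  rw [LinearMap.comp_apply, LinearMap.adjoint_inner_left, real_inner_self_eq_norm_sq]

lemma sq_minModulus_le_of_hasEigenvalue {T : E →ₗ[ℝ] F} {μ : ℝ}
    (hμ : HasEigenvalue (adjoint T ∘ₗ T) μ) : minModulus T ^ 2 ≤ μ := by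
  obtain ⟨x, hx⟩ := hμ.exists_hasEigenvector
  set y : sphere (0 : E) 1 := ⟨‖x‖⁻¹ • x, by simpa using norm_smul_inv_norm (𝕜 := ℝ) hx.2⟩
  have hy : (adjoint T ∘ₗ T) y = μ • (y : E) := by
    simp only [y, map_smul, hx.apply_eq_smul, smul_comm μ]
  calc minModulus T ^ 2 ≤ ‖T y‖ ^ 2 := by gcongr; exacts [minModulus_nonneg T, minModulus_le T y]
    _ = μ := by
      rw [← inner_adjoint_comp_self_apply_self, hy, real_inner_smul_left,
        real_inner_self_eq_norm_sq, norm_eq_of_mem_sphere]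
      ring

lemma exists_hasEigenvalue_le_sq_minModulus [Nontrivial E] (T : E →ₗ[ℝ] F) :
    ∃ μ, HasEigenvalue (adjoint T ∘ₗ T) μ ∧ μ ≤ minModulus T ^ 2 := by
  refine ⟨_, T.isSymmetric_adjoint_comp_self.hasEigenvalue_iInf_of_finiteDimensional, ?_⟩
  have : Nonempty (sphere (0 : E) 1) := (NormedSpace.sphere_nonempty.mpr zero_le_one).to_subtype
  -- `√μ ≤ ‖T x‖` on the unit sphere, where the Rayleigh quotient of `T* T` is `‖T x‖ ^ 2`
  refine (Real.sqrt_le_iff.mp (le_ciInf fun x ↦ Real.sqrt_le_iff.mpr ⟨norm_nonneg _, ?_⟩)).2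
  refine (ciInf_le ⟨0, ?_⟩ ⟨x, ne_zero_of_mem_unit_sphere x⟩).trans_eq ?_
  · rintro _ ⟨y, rfl⟩
    dsimp only
    rw [RCLike.re_to_real, inner_adjoint_comp_self_apply_self]
    positivity
  · rw [RCLike.re_to_real, inner_adjoint_comp_self_apply_self, norm_eq_of_mem_sphere]
    simp

lemma minModulus_adjoint_le (T : E →ₗ[ℝ] F) (h : Module.finrank ℝ E = Module.finrank ℝ F) :
    minModulus (adjoint T) ≤ minModulus T := by
  cases subsingleton_or_nontrivial E
  · have : Subsingleton F := Module.finrank_zero_iff.mp (h ▸ Module.finrank_zero_of_subsingleton)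
    rw [minModulus_of_subsingleton, minModulus_of_subsingleton]
  obtain ⟨μ, hμ, hμT⟩ := exists_hasEigenvalue_le_sq_minModulus T
  have hμ' : HasEigenvalue (adjoint (adjoint T) ∘ₗ adjoint T) μ := by
    rw [LinearMap.adjoint_adjoint]
    exact hasEigenvalue_self_comp_adjoint h hμ
  have := (sq_minModulus_le_of_hasEigenvalue hμ').trans hμT
  exact (pow_le_pow_iff_left₀ (minModulus_nonneg _) (minModulus_nonneg _) two_ne_zero).mp this

lemma minModulus_adjoint (T : E →ₗ[ℝ] F) (h : Module.finrank ℝ E = Module.finrank ℝ F) :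
    minModulus (adjoint T) = minModulus T :=
  le_antisymm (minModulus_adjoint_le T h) (by simpa using minModulus_adjoint_le (adjoint T) h.symm)

end RealInnerProduct

section Projection

variable {E : Type*} [NormedAddCommGroup E] [InnerProductSpace ℝ E]

lemma exists_norm_eq_one_inner_eq_norm [Nontrivial E] (x : E) :
    ∃ v : E, ‖v‖ = 1 ∧ ⟪x, v⟫ = ‖x‖ := by
  rcases eq_or_ne x 0 with rfl | hx
  · obtain ⟨v, hv⟩ := exists_norm_eq E zero_le_one
    exact ⟨v, hv, by simp⟩
  · refine ⟨‖x‖⁻¹ • x, norm_smul_inv_norm hx, ?_⟩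
    rw [real_inner_smul_right, real_inner_self_eq_norm_sq]
    field_simp

lemma sSup_inner_unit_eq_norm_orthogonalProjectionOnto (K : Submodule ℝ E)
    [K.HasOrthogonalProjection] (u : E) :
    sSup {s : ℝ | ∃ v ∈ K, ‖v‖ = 1 ∧ s = ⟪u, v⟫} = ‖K.orthogonalProjectionOnto u‖ := by
  have inner_eq (v : K) : ⟪u, v⟫ = ⟪K.orthogonalProjectionOnto u, v⟫ :=
    (K.inner_orthogonalProjectionOnto_eq_of_mem_right v u).symm
  rcases subsingleton_or_nontrivial K with hK | hK
  · have : {s : ℝ | ∃ v ∈ K, ‖v‖ = 1 ∧ s = ⟪u, v⟫} = ∅ := by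
      refine Set.eq_empty_of_forall_notMem fun _ ⟨v, hv, hv1, _⟩ ↦ ?_
      have : (⟨v, hv⟩ : K) = 0 := Subsingleton.elim _ _
      simp_all
    simp [this, Subsingleton.elim (K.orthogonalProjectionOnto u) 0]
  refine IsGreatest.csSup_eq ⟨?_, ?_⟩
  · obtain ⟨v, hv, hPv⟩ := exists_norm_eq_one_inner_eq_norm (K.orthogonalProjectionOnto u)
    exact ⟨v, v.2, by simpa using hv, by rw [inner_eq, hPv]⟩
  · rintro _ ⟨v, hv, hv1, rfl⟩
    calc ⟪u, v⟫ = ⟪K.orthogonalProjectionOnto u, ⟨v, hv⟩⟫ := inner_eq ⟨v, hv⟩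
      _ ≤ ‖K.orthogonalProjectionOnto u‖ * ‖(⟨v, hv⟩ : K)‖ := real_inner_le_norm _ _
      _ = ‖K.orthogonalProjectionOnto u‖ := by simp [hv1]

end Projection

lemma subspaceAngle_eq_arccos_minModulus {d : ℕ} (U V : Submodule ℝ (EuclideanSpace ℝ (Fin d))) :
    subspaceAngle U V =
      Real.arccos (minModulus (V.orthogonalProjectionOnto.toLinearMap ∘ₗ U.subtype)) := by
  simp_rw [subspaceAngle, sSup_inner_unit_eq_norm_orthogonalProjectionOnto, minModulus, iInf]
  congr 2
  ext c
  constructor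
  · rintro ⟨u, hu, hu1, rfl⟩
    exact ⟨⟨⟨u, hu⟩, by simpa using hu1⟩, rfl⟩
  · rintro ⟨x, rfl⟩
    exact ⟨x.1, x.1.2, (U.coe_norm _).trans (norm_eq_of_mem_sphere x), rfl⟩

theorem subspaceAngle_symm_of_finrank_eq {d : ℕ}
    (U V : Submodule ℝ (EuclideanSpace ℝ (Fin d)))
    (h : Module.finrank ℝ U = Module.finrank ℝ V) :
    subspaceAngle U V = subspaceAngle V U := by
  rw [subspaceAngle_eq_arccos_minModulus, subspaceAngle_eq_arccos_minModulus,
    ← adjoint_orthogonalProjectionOnto_comp_subtype U V, minModulus_adjoint _ h]
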